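/- For positive integers a and b, the polynomials ψ_a and ψ_b have a common root if and only if gcd(a,b) > 1. In particular, if gcd(a,b)=1 then ψ_a and ψ_b are coprime polynomials. -/
import Mathlib

open Polynomial Real

noncomputable def psi : ℕ → Polynomial ℝ
  | 0 => 0
  | 1 => 1
  | (n + 2) => Polynomial.X * psi (n + 1) - psi n

lemma psi_add_two (n : ℕ) : psi (n+2) = X * psi (n+1) - psi n := rfl

lemma psi_eval_cos (θ : ℝ) (n : ℕ) :
    (psi n).eval (2 * Real.cos θ) * Real.sin θ = Real.sin (n * θ) := by
  induction n using Nat.twoStepInduction with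
  | zero => simp [psi]
  | one => simp [psi]
  | more n ih1 ih2 =>
    rw [psi_add_two]
    simp only [eval_sub, eval_mul, eval_X]
    push_cast
    rw [show ((n:ℝ)+2) * θ = ((n:ℝ)+1) * θ + θ by ring, Real.sin_add]
    push_cast at ih1 ih2
    rw [show (n:ℝ) * θ = ((n:ℝ)+1) * θ - θ by ring, Real.sin_sub] at ih1
    linear_combination (2 * Real.cos θ) * ih2 - ih1

lemma psi_root_of_dvd {d n : ℕ} (hd : 2 ≤ d) (hdn : d ∣ n) :
    (psi n).eval (2 * Real.cos (Real.pi / d)) = 0 := by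
  obtain ⟨m, rfl⟩ := hdn
  have hd0 : (0:ℝ) < d := by positivity
  have hsin : Real.sin (Real.pi / d) ≠ 0 := by
    apply ne_of_gt
    apply Real.sin_pos_of_pos_of_lt_pi
    · positivity
    · rw [div_lt_iff₀ hd0]
      nlinarith [Real.pi_pos, show (2:ℝ) ≤ d by exact_mod_cast hd]
  have h := psi_eval_cos (Real.pi / d) (d * m)
  have e : ((d*m : ℕ):ℝ) * (Real.pi / d) = m * Real.pi := by
    push_cast
    field_simp
  rw [e, Real.sin_nat_mul_pi] at h
  exact (mul_eq_zero.mp h).resolve_right hsin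

lemma psi_coprime_succ (n : ℕ) : IsCoprime (psi n) (psi (n+1)) := by
  induction n with
  | zero => simpa [psi] using (isCoprime_one_right (x := (0 : Polynomial ℝ)))
  | succ n ih =>
    have h := (ih.symm.neg_right).add_mul_left_right X
    have e : -psi n + psi (n+1) * X = psi (n+2) := by rw [psi_add_two]; ring
    rwa [e] at h

lemma psi_add (m n : ℕ) : psi (m+n+1) = psi (m+1) * psi (n+1) - psi m * psi n := by
  induction n using Nat.twoStepInduction with
  | zero => simp [psi]
  | one =>
    have : m + 1 + 1 = m + 2 := rfl
    rw [show m+1+1 = m+2 from rfl, psi_add_two]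
    simp [psi]
    ring
  | more n ih1 ih2 =>
    rw [show m + (n+2) + 1 = (m+n+1) + 2 by omega, psi_add_two]
    rw [show m + (n+1) + 1 = (m+n+1) + 1 by omega, show n+1+1 = n+2 by omega,
      psi_add_two n] at ih2
    rw [show n+2+1 = (n+1)+2 by omega, psi_add_two (n+1), show n+1+1 = n+2 by omega,
      psi_add_two n, ih1, ih2]
    ring

lemma psi_coprime : ∀ N a b, a + b ≤ N → Nat.gcd a b = 1 → IsCoprime (psi a) (psi b) := by
  intro N
  induction N with
  | zero =>
    intro a b h hg
    have h0 : a + b = 0 := Nat.le_zero.mp h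
    have : a = 0 ∧ b = 0 := by omega
    simp_all
  | succ N ih =>
    have main : ∀ a b : ℕ, 0 < a → a < b → a + b ≤ N + 1 → Nat.gcd a b = 1 →
        IsCoprime (psi a) (psi b) := by
      intro a b ha h hab hg
      have key : psi b = psi a * psi (b-a+1) - psi (a-1) * psi (b-a) := by
        have := psi_add (a-1) (b-a)
        rw [show a-1+(b-a)+1 = b by omega, show a-1+1 = a by omega] at this
        exact this
      have c1 : IsCoprime (psi a) (psi (b-a)) := by
        apply ih a (b-a) (by omega)
        rwa [Nat.gcd_sub_self_right (le_of_lt h)]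
      have c2 : IsCoprime (psi a) (psi (a-1)) := by
        have := psi_coprime_succ (a-1)
        rw [show a-1+1 = a by omega] at this
        exact this.symm
      have h2 := ((c2.mul_right c1).neg_right).add_mul_left_right (psi (b-a+1))
      have e : -(psi (a-1) * psi (b-a)) + psi a * psi (b-a+1) = psi b := by
        rw [key]; ring
      rwa [e] at h2
    intro a b hab hg
    rcases Nat.eq_zero_or_pos a with rfl|ha
    · simp only [Nat.gcd_zero_left] at hg
      subst hg
      simpa [psi] using (isCoprime_one_right (x := (0 : Polynomial ℝ)))
    rcases Nat.eq_zero_or_pos b with rfl|hb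
    · simp only [Nat.gcd_zero_right] at hg
      subst hg
      simpa [psi] using (isCoprime_one_left (x := (0 : Polynomial ℝ)))
    rcases lt_trichotomy a b with h|rfl|h
    · exact main a b ha h hab hg
    · have : a = 1 := by simpa using hg
      subst this
      simpa [psi] using (isCoprime_one_left (x := (1 : Polynomial ℝ)))
    · exact (main b a hb h (by omega) (by rwa [Nat.gcd_comm])).symm

theorem psi_common_root_iff (a b : ℕ) (ha : 1 ≤ a) (hb : 1 ≤ b) :
    ((∃ x : ℝ, (psi a).eval x = 0 ∧ (psi b).eval x = 0) ↔ 1 < Nat.gcd a b) ∧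
    (Nat.gcd a b = 1 → IsCoprime (psi a) (psi b)) := by
  have hgp : 0 < Nat.gcd a b := Nat.gcd_pos_of_pos_left b ha
  constructor
  · constructor
    · rintro ⟨x, hxa, hxb⟩
      by_contra h
      have hg : Nat.gcd a b = 1 := by omega
      obtain ⟨u, v, huv⟩ := psi_coprime (a+b) a b le_rfl hg
      have := congrArg (Polynomial.eval x) huv
      simp [hxa, hxb] at this
    · intro hgcd
      exact ⟨2 * Real.cos (Real.pi / (Nat.gcd a b)),
        psi_root_of_dvd hgcd (Nat.gcd_dvd_left a b),
        psi_root_of_dvd hgcd (Nat.gcd_dvd_right a b)⟩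
  · intro hg
    exact psi_coprime (a+b) a b le_rfl hg
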